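/- arXiv:2005.02622 — 2 statements merged into one kernel-verified Lean document; each statement's English description precedes it below -/
import Mathlib

section
/- Let G be a group, J ⊴ G a normal subgroup of finite index, and let Λ, Λ' be finite-dimensional complex representations of G whose restrictions to J are equal and irreducible. Then there exists a character χ : G → ℂ^× trivial on J such that Λ' is isomorphic to Λ ⊗ χ. -/
/-- Let `G` be a group, `J` a normal subgroup of finite index, and `Λ, Λ'`
finite-dimensional complex representations of `G` on the same space whose
restrictions to `J` agree and are irreducible.  Then there is a character
`χ : G → ℂˣ`, trivial on `J`, with `Λ' ≅ Λ ⊗ χ`. -/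
theorem exists_character_of_restrictions_eq_irreducible
    {G : Type*} [Group G] (J : Subgroup G) [J.Normal] [J.FiniteIndex]
    {V : Type*} [AddCommGroup V] [Module ℂ V] [FiniteDimensional ℂ V] [Nontrivial V]
    (Λ Λ' : Representation ℂ G V)
    (hres : ∀ j ∈ J, Λ j = Λ' j)
    (hirr : ∀ W : Submodule ℂ V, (∀ j ∈ J, ∀ v ∈ W, Λ j v ∈ W) → W = ⊥ ∨ W = ⊤) :
    ∃ χ : G →* ℂˣ, (∀ j ∈ J, χ j = 1) ∧
      ∃ T : V ≃ₗ[ℂ] V, ∀ g : G,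
        (T : V →ₗ[ℂ] V) ∘ₗ Λ' g = ((χ g : ℂ) • Λ g) ∘ₗ (T : V →ₗ[ℂ] V) := by
  classical
  have hΛinv : ∀ (g : G) (v : V), Λ g⁻¹ (Λ g v) = v := by
    intro g v
    rw [← Module.End.mul_apply, ← map_mul, inv_mul_cancel, map_one, Module.End.one_apply]
  have hΛ'inv : ∀ (g : G) (v : V), Λ' g⁻¹ (Λ' g v) = v := by
    intro g v
    rw [← Module.End.mul_apply, ← map_mul, inv_mul_cancel, map_one, Module.End.one_apply]
  -- Schur-type key lemma: for every g there is a scalar c with Λ' g = c • Λ g.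
  have key : ∀ g : G, ∃ c : ℂ, ∀ v : V, Λ' g v = c • Λ g v := by
    intro g
    set A : Module.End ℂ V := Λ' g * Λ g⁻¹ with hA
    have hcomm : ∀ j ∈ J, ∀ v : V, A (Λ j v) = Λ j (A v) := by
      intro j hj v
      have hjmem : g⁻¹ * j * g ∈ J := by
        have := Subgroup.Normal.conj_mem ‹J.Normal› j hj g⁻¹
        simpa using this
      have h1 : Λ g⁻¹ (Λ j v) = Λ (g⁻¹ * j * g) (Λ g⁻¹ v) := by
        rw [← Module.End.mul_apply, ← map_mul, ← Module.End.mul_apply, ← map_mul]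
        congr 2
        group
      have h2 : Λ (g⁻¹ * j * g) (Λ g⁻¹ v) = Λ' (g⁻¹ * j * g) (Λ g⁻¹ v) := by
        rw [hres _ hjmem]
      have h3 : Λ' g (Λ' (g⁻¹ * j * g) (Λ g⁻¹ v)) = Λ' j (Λ' g (Λ g⁻¹ v)) := by
        rw [← Module.End.mul_apply, ← map_mul, ← Module.End.mul_apply (Λ' j), ← map_mul]
        congr 2
        group
      have h4 : Λ' j = Λ j := (hres j hj).symm
      show Λ' g (Λ g⁻¹ (Λ j v)) = Λ j (Λ' g (Λ g⁻¹ v))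
      rw [h1, h2, h3, h4]
    obtain ⟨c, hc⟩ := Module.End.exists_eigenvalue A
    have hinv : ∀ j ∈ J, ∀ v ∈ Module.End.eigenspace A c, Λ j v ∈ Module.End.eigenspace A c := by
      intro j hj v hv
      rw [Module.End.mem_eigenspace_iff] at hv ⊢
      rw [hcomm j hj v, hv]
      exact map_smul _ _ _
    have hW : Module.End.eigenspace A c = ⊤ := by
      rcases hirr (Module.End.eigenspace A c) hinv with h | h
      · exact absurd h hc
      · exact h
    refine ⟨c, fun v => ?_⟩
    have hv : A (Λ g v) = c • Λ g v :=
      Module.End.mem_eigenspace_iff.mp (hW ▸ Submodule.mem_top)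
    have : Λ' g (Λ g⁻¹ (Λ g v)) = c • Λ g v := hv
    rwa [hΛinv g v] at this
  choose cf hcf using key
  obtain ⟨v₀, hv₀⟩ := exists_ne (0 : V)
  have hΛne : ∀ g : G, Λ g v₀ ≠ 0 := by
    intro g h
    apply hv₀
    rw [← hΛinv g v₀, h, map_zero]
  have hΛ'ne : ∀ g : G, Λ' g v₀ ≠ 0 := by
    intro g h
    apply hv₀
    rw [← hΛ'inv g v₀, h, map_zero]
  have hunique : ∀ (g : G) (d : ℂ), (∀ v, Λ' g v = d • Λ g v) → d = cf g := by
    intro g d hd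
    have h : d • Λ g v₀ = cf g • Λ g v₀ := by rw [← hd v₀, hcf g v₀]
    have h2 : (d - cf g) • Λ g v₀ = 0 := by rw [sub_smul, h, sub_self]
    rcases smul_eq_zero.mp h2 with h3 | h3
    · exact sub_eq_zero.mp h3
    · exact absurd h3 (hΛne g)
  have hne : ∀ g : G, cf g ≠ 0 := by
    intro g h
    apply hΛ'ne g
    rw [hcf g v₀, h, zero_smul]
  have hmul : ∀ g h : G, cf (g * h) = cf g * cf h := by
    intro g h
    refine (hunique (g * h) (cf g * cf h) fun v => ?_).symm
    calc Λ' (g * h) v = Λ' g (Λ' h v) := by rw [map_mul]; rfl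
      _ = Λ' g (cf h • Λ h v) := by rw [hcf h v]
      _ = cf h • Λ' g (Λ h v) := by rw [map_smul]
      _ = cf h • (cf g • Λ g (Λ h v)) := by rw [hcf g (Λ h v)]
      _ = (cf g * cf h) • Λ (g * h) v := by
          rw [smul_smul, mul_comm (cf h)]
          congr 1
          rw [map_mul]; rfl
  have hJ1 : ∀ j ∈ J, cf j = 1 := by
    intro j hj
    refine (hunique j 1 fun v => ?_).symm
    rw [one_smul, hres j hj]
  refine ⟨MonoidHom.mk' (fun g => Units.mk0 (cf g) (hne g))
      (fun g h => Units.ext (by simp [hmul])), ?_, ?_⟩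
  · intro j hj
    exact Units.ext (by simpa using hJ1 j hj)
  · refine ⟨LinearEquiv.refl ℂ V, fun g => ?_⟩
    ext v
    simpa using hcf g v
end

section
/- Let D be a finite-dimensional central division algebra over a non-archimedean local field F with d² = dim_F D, let V be a finite right D-module, and let Λ : ℝ → {O_D-lattices in V} be a lattice function (decreasing, left-continuous, Λ(r + 1/d) = Λ(r)·ϖ_D). Then Λ arises from an O_D-chain (i.e. there exist c ∈ ℝ, a strictly decreasing periodic chain (L_i)_{i∈ℤ} of period e with Λ(r) = L_{⌈de(r−c)⌉}) if and only if the set of discontinuity points of Λ is of the form c + (de)^{-1}ℤ for some c ∈ ℝ and positive integer e. -/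
private lemma const_on_interval {R V : Type*} [Ring R] [AddCommGroup V] [Module R V]
    (Λ : ℝ → Submodule R V)
    (hlc : ∀ r : ℝ, ∃ ε > (0:ℝ), ∀ r' : ℝ, r - ε < r' → r' ≤ r → Λ r' = Λ r)
    {a b : ℝ}
    (hcont : ∀ x : ℝ, a < x → x < b → ∃ ε > (0:ℝ), ∀ r' : ℝ, x < r' → r' < x + ε → Λ r' = Λ x)
    {r0 : ℝ} (h1 : a < r0) (h2 : r0 ≤ b) : Λ r0 = Λ b := by
  set S : Set ℝ := {t | t ∈ Set.Icc r0 b ∧ Λ t = Λ r0} with hS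
  have hne : r0 ∈ S := ⟨⟨le_refl _, h2⟩, rfl⟩
  have hbdd : BddAbove S := ⟨b, fun t ht => ht.1.2⟩
  set s := sSup S with hs
  have hs1 : r0 ≤ s := le_csSup hbdd hne
  have hs2 : s ≤ b := csSup_le ⟨r0, hne⟩ (fun t ht => ht.1.2)
  have hΛs : Λ s = Λ r0 := by
    obtain ⟨ε, hε, hεp⟩ := hlc s
    obtain ⟨t, htS, ht⟩ := exists_lt_of_lt_csSup ⟨r0, hne⟩ (show s - ε < s by linarith)
    have h := hεp t ht (le_csSup hbdd htS)
    rw [← h, htS.2]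
  have hsb : s = b := by
    by_contra h
    have hsb' : s < b := lt_of_le_of_ne hs2 h
    obtain ⟨ε, hε, hεp⟩ := hcont s (lt_of_lt_of_le h1 hs1) hsb'
    set t := min (s + ε/2) b with htdef
    have h1' : s < t := lt_min (by linarith) hsb'
    have h2' : t < s + ε := lt_of_le_of_lt (min_le_left _ _) (by linarith)
    have hΛt : Λ t = Λ s := hεp t h1' h2'
    have htS : t ∈ S := ⟨⟨le_trans hs1 h1'.le, min_le_right _ _⟩, by rw [hΛt, hΛs]⟩
    exact absurd (le_csSup hbdd htS) (not_le.mpr h1')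
  rw [← hΛs, hsb]


/-- Lattice functions versus lattice chains.  Let `V` be a (right) `O_D`-module,
modelled as a module over a ring `R` together with a ring automorphism `σ`
(conjugation by a uniformizer `ϖ_D`) and the `σ`-semilinear map `f : v ↦ v·ϖ_D`.
Let `Λ : ℝ → {lattices}` be a lattice function: decreasing, left-continuous (for the
discrete topology), with `Λ(r + 1/d) = Λ(r)·ϖ_D`.  Then `Λ` arises from an
`O_D`-chain of some period `e` (i.e. `Λ(r) = L_{⌈de(r−c)⌉}` for a strictly
decreasing chain `(L_i)` with `L_{i+e} = L_i·ϖ_D`) if and only if the set of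
discontinuity points of `Λ` equals `c + (de)⁻¹ℤ` for some `c ∈ ℝ` and some
positive integer `e`. -/
theorem lattice_function_from_chain_iff_discontinuities
    {R V : Type*} [Ring R] [AddCommGroup V] [Module R V]
    (σ : R ≃+* R) [RingHomSurjective σ.toRingHom]
    (f : V →ₛₗ[σ.toRingHom] V)
    (d : ℕ) (hd : 0 < d)
    (Λ : ℝ → Submodule R V)
    (hdec : ∀ r r' : ℝ, r ≤ r' → Λ r' ≤ Λ r)
    (hlc : ∀ r : ℝ, ∃ ε > (0 : ℝ), ∀ r' : ℝ, r - ε < r' → r' ≤ r → Λ r' = Λ r)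
    (hper : ∀ r : ℝ, Λ (r + 1 / d) = (Λ r).map f) :
    (∃ (c : ℝ) (e : ℕ) (L : ℤ → Submodule R V), 0 < e ∧
        (∀ i : ℤ, L (i + 1) < L i) ∧
        (∀ i : ℤ, L (i + e) = (L i).map f) ∧
        (∀ r : ℝ, Λ r = L ⌈(d * e : ℝ) * (r - c)⌉)) ↔
      (∃ (c : ℝ) (e : ℕ), 0 < e ∧
        {r : ℝ | ∀ ε > (0 : ℝ), ∃ r' : ℝ, r < r' ∧ r' < r + ε ∧ Λ r' ≠ Λ r} =
          {x : ℝ | ∃ k : ℤ, x = c + k / (d * e)}) := by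
  have hdpos : (0:ℝ) < d := by exact_mod_cast hd
  constructor
  · rintro ⟨c, e, L, he, hstrict, hperiod, hrep⟩
    have hepos : (0:ℝ) < e := by exact_mod_cast he
    have hN : (0:ℝ) < (d:ℝ) * e := by positivity
    refine ⟨c, e, he, ?_⟩
    ext r
    simp only [Set.mem_setOf_eq]
    constructor
    · intro hdisc
      by_contra hr
      push_neg at hr
      set k := ⌈((d:ℝ) * e) * (r - c)⌉ with hk
      have hub : ((d:ℝ) * e) * (r - c) ≤ k := Int.le_ceil _
      have hne : ((d:ℝ) * e) * (r - c) ≠ (k:ℝ) := by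
        intro h
        apply hr k
        have : r - c = (k:ℝ)/((d:ℝ)*e) := by
          rw [eq_div_iff (ne_of_gt hN)]; linear_combination h
        linarith
      have hlt : ((d:ℝ) * e) * (r - c) < k := lt_of_le_of_ne hub hne
      set b := c + (k:ℝ) / ((d:ℝ)*e) with hb
      have hbc : ((d:ℝ)*e) * (b - c) = (k:ℝ) := by rw [hb]; field_simp; ring
      have hrb : r < b := by nlinarith
      obtain ⟨r', hr1, hr2, hr3⟩ := hdisc (b - r) (by linarith)
      apply hr3
      rw [hrep, hrep]
      congr 1
      have hceq : ⌈((d:ℝ) * e) * (r' - c)⌉ = k := by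
        rw [Int.ceil_eq_iff]
        constructor
        · have hk1 : ((k:ℝ) - 1) < ((d:ℝ)*e) * (r - c) := by
            have := Int.ceil_lt_add_one (((d:ℝ) * e) * (r - c))
            push_cast at this ⊢
            linarith
          push_cast
          nlinarith
        · nlinarith [mul_lt_mul_of_pos_left (show r' - c < b - c by linarith) hN]
      rw [hceq]
    · rintro ⟨k, hk⟩ ε hε
      have hrk : ((d:ℝ)*e) * (r - c) = (k:ℝ) := by rw [hk]; field_simp; ring
      set δ := min ε (1/((d:ℝ)*e)) with hδ
      have hδ0 : 0 < δ := lt_min hε (by positivity)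
      refine ⟨r + δ/2, by linarith, by
        have := min_le_left ε (1/((d:ℝ)*e)); linarith, ?_⟩
      have h1 : ((d:ℝ)*e) * δ ≤ 1 := by
        calc ((d:ℝ)*e) * δ ≤ ((d:ℝ)*e) * (1/((d:ℝ)*e)) :=
              mul_le_mul_of_nonneg_left (min_le_right _ _) hN.le
          _ = 1 := by field_simp
      have hceil : ⌈((d:ℝ) * e) * (r + δ/2 - c)⌉ = k + 1 := by
        rw [Int.ceil_eq_iff]
        constructor
        · push_cast; nlinarith
        · push_cast; nlinarith
      rw [hrep, hrep, hceil, hrk, Int.ceil_intCast]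
      exact ne_of_lt (hstrict k)
  · rintro ⟨c, e, he, hset⟩
    have hepos : (0:ℝ) < e := by exact_mod_cast he
    have hN : (0:ℝ) < (d:ℝ) * e := by positivity
    set L : ℤ → Submodule R V := fun i => Λ (c + (i:ℝ) / ((d:ℝ)*e)) with hL
    have hnd : ∀ x : ℝ, (∀ k : ℤ, x ≠ c + (k:ℝ)/((d:ℝ)*e)) →
        ∃ ε > (0:ℝ), ∀ r' : ℝ, x < r' → r' < x + ε → Λ r' = Λ x := by
      intro x hx
      have hmem : x ∉ {r : ℝ | ∀ ε > (0 : ℝ), ∃ r' : ℝ, r < r' ∧ r' < r + ε ∧ Λ r' ≠ Λ r} := by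
        rw [hset]
        rintro ⟨k, hk⟩
        exact hx k hk
      simp only [Set.mem_setOf_eq] at hmem
      push_neg at hmem
      obtain ⟨ε, hε, hεp⟩ := hmem
      exact ⟨ε, hε, fun r' hh1 hh2 => hεp r' hh1 hh2⟩
    have hstep : ∀ (k : ℤ) (r : ℝ), c + ((k:ℝ)-1)/((d:ℝ)*e) < r → r ≤ c + (k:ℝ)/((d:ℝ)*e) →
        Λ r = L k := by
      intro k r h1 h2
      exact const_on_interval Λ hlc (a := c + ((k:ℝ)-1)/((d:ℝ)*e)) (b := c + (k:ℝ)/((d:ℝ)*e))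
        (fun x hx1 hx2 => hnd x (by
          intro m hm
          rw [hm] at hx1 hx2
          have hm1 : ((k:ℝ)-1)/((d:ℝ)*e) < (m:ℝ)/((d:ℝ)*e) := by linarith
          have hm2 : (m:ℝ)/((d:ℝ)*e) < (k:ℝ)/((d:ℝ)*e) := by linarith
          rw [div_lt_div_iff_of_pos_right hN] at hm1 hm2
          have i1 : k - 1 < m := by exact_mod_cast hm1
          have i2 : m < k := by exact_mod_cast hm2
          omega)) h1 h2
    refine ⟨c, e, L, he, ?_, ?_, ?_⟩
    · intro i
      have key : (c + (i:ℝ)/((d:ℝ)*e)) ∈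
          {r : ℝ | ∀ ε > (0 : ℝ), ∃ r' : ℝ, r < r' ∧ r' < r + ε ∧ Λ r' ≠ Λ r} := by
        rw [hset]; exact ⟨i, rfl⟩
      obtain ⟨r', hh1, hh2, hh3⟩ := key (1/((d:ℝ)*e)) (by positivity)
      have hsum : (i:ℝ)/((d:ℝ)*e) + 1/((d:ℝ)*e) = ((i:ℝ)+1)/((d:ℝ)*e) := by ring
      have hr'val : Λ r' = L (i+1) := by
        apply hstep (i+1)
        · push_cast; ring_nf; ring_nf at hh1; linarith
        · push_cast; linarith
      have hneq : L (i+1) ≠ L i := by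
        rw [← hr'val]; exact hh3
      have hle : L (i+1) ≤ L i := by
        apply hdec
        push_cast
        have : (i:ℝ)/((d:ℝ)*e) ≤ ((i:ℝ)+1)/((d:ℝ)*e) := by
          rw [div_le_div_iff_of_pos_right hN]; linarith
        linarith
      exact lt_of_le_of_ne hle hneq
    · intro i
      show Λ (c + ((i + (e:ℤ) : ℤ):ℝ)/((d:ℝ)*e)) = Submodule.map f (Λ (c + (i:ℝ)/((d:ℝ)*e)))
      rw [← hper]
      congr 1
      push_cast
      field_simp
      ring
    · intro r
      set k := ⌈((d:ℝ)*e)*(r-c)⌉ with hk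
      have hub : ((d:ℝ)*e)*(r-c) ≤ (k:ℝ) := Int.le_ceil _
      have hlb : (k:ℝ) - 1 < ((d:ℝ)*e)*(r-c) := by
        have := Int.ceil_lt_add_one (((d:ℝ)*e)*(r-c))
        push_cast at this
        linarith
      apply hstep
      · have : ((k:ℝ)-1)/((d:ℝ)*e) < r - c := by
          rw [div_lt_iff₀ hN]; nlinarith
        linarith
      · have : r - c ≤ (k:ℝ)/((d:ℝ)*e) := by
          rw [le_div_iff₀ hN]; nlinarith
        linarith
end
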